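/- arXiv:math/9403212 — 6 statements merged into one kernel-verified Lean document; each statement's English description precedes it below -/
import Mathlib

section
/- Let X be a normed space and Y, Z closed subspaces of X. Define Θ₀(Y,Z) = sup over y in the unit sphere of Y of dist(y, Z), and Ω₀(Y,Z) = sup over y in the unit sphere of Y of dist(y, S(Z)), where S(Z) is the unit sphere of Z. Then 0 ≤ Θ₀(Y,Z) ≤ Ω₀(Y,Z) ≤ 2·Θ₀(Y,Z) (assuming Z ≠ {0} so that S(Z) is nonempty). -/
/-!
Since `S(Z) ⊆ Z`, distances to `S(Z)` dominate distances to `Z`, giving `Θ₀ ≤ Ω₀`. Conversely,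
if `y` is a unit vector and `z ∈ Z` is nonzero, then `z / ‖z‖ ∈ S(Z)` lies within
`|‖z‖ - 1| ≤ ‖y - z‖` of `z`, so `dist(y, S(Z)) ≤ 2 ‖y - z‖`; for `z = 0` the same bound holds
because `dist(y, S(Z)) ≤ 2 = 2 ‖y‖`. Taking the infimum over `z` and then suprema over `y` gives
`Ω₀ ≤ 2 Θ₀`.
-/

open Metric Set

section NormedSpace

variable {X : Type*} [NormedAddCommGroup X] [NormedSpace ℝ X]

theorem norm_sub_smul_inv_norm_le {y z : X} (hy : ‖y‖ = 1) (hz : z ≠ 0) :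
    ‖y - ‖z‖⁻¹ • z‖ ≤ 2 * ‖y - z‖ := by
  have hz' : ‖z‖ ≠ 0 := norm_ne_zero_iff.2 hz
  have hnormalize : ‖z - ‖z‖⁻¹ • z‖ = |‖z‖ - 1| := by
    nth_rw 1 [← one_smul ℝ z]
    rw [← sub_smul, norm_smul, Real.norm_eq_abs, ← abs_norm z, ← abs_mul, abs_norm,
      sub_mul, inv_mul_cancel₀ hz', one_mul, abs_sub_comm]
  have hshift : |‖z‖ - 1| ≤ ‖y - z‖ := by
    rw [← hy, norm_sub_rev]
    exact abs_norm_sub_norm_le z y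
  calc ‖y - ‖z‖⁻¹ • z‖ ≤ ‖y - z‖ + ‖z - ‖z‖⁻¹ • z‖ := norm_sub_le_norm_sub_add_norm_sub _ _ _
    _ ≤ 2 * ‖y - z‖ := by linarith

theorem infDist_unitSphere_le_two_mul_infDist (Z : Submodule ℝ X) (hZ : ∃ z ∈ Z, z ≠ 0)
    {y : X} (hy : ‖y‖ = 1) :
    infDist y {z : X | z ∈ Z ∧ ‖z‖ = 1} ≤ 2 * infDist y (Z : Set X) := by
  obtain ⟨z₀, hz₀, hz₀ne⟩ := hZ
  have hnormalize_mem : ∀ z ∈ Z, z ≠ 0 → ‖z‖⁻¹ • z ∈ {z : X | z ∈ Z ∧ ‖z‖ = 1} :=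
    fun z hz hne => ⟨Z.smul_mem _ hz, norm_smul_inv_norm hne⟩
  rw [← div_le_iff₀' two_pos, le_infDist ⟨0, Z.zero_mem⟩]
  intro z hz
  rw [div_le_iff₀' two_pos]
  rcases eq_or_ne z 0 with rfl | hne
  · calc infDist y {z : X | z ∈ Z ∧ ‖z‖ = 1} ≤ dist y (‖z₀‖⁻¹ • z₀) :=
          infDist_le_dist_of_mem (hnormalize_mem z₀ hz₀ hz₀ne)
      _ ≤ ‖y‖ + ‖‖z₀‖⁻¹ • z₀‖ := by rw [dist_eq_norm]; exact norm_sub_le _ _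
      _ = 2 * dist y 0 := by
        rw [(hnormalize_mem z₀ hz₀ hz₀ne).2, dist_zero_right, hy, one_add_one_eq_two, mul_one]
  · calc infDist y {z : X | z ∈ Z ∧ ‖z‖ = 1} ≤ dist y (‖z‖⁻¹ • z) :=
          infDist_le_dist_of_mem (hnormalize_mem z hz hne)
      _ ≤ 2 * dist y z := by
        rw [dist_eq_norm, dist_eq_norm]; exact norm_sub_smul_inv_norm_le hy hne

theorem infDist_submodule_le_norm (Z : Submodule ℝ X) (y : X) :
    infDist y (Z : Set X) ≤ ‖y‖ := by
  simpa using infDist_le_dist_of_mem (x := y) Z.zero_mem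

end NormedSpace

theorem Real.sSup_image_le_mul_sSup_image {α : Type*} {s : Set α} {f g : α → ℝ} {c : ℝ}
    (hc : 0 ≤ c) (hg₀ : ∀ x ∈ s, 0 ≤ g x) (hg : BddAbove (g '' s))
    (hfg : ∀ x ∈ s, f x ≤ c * g x) :
    sSup (f '' s) ≤ c * sSup (g '' s) :=
  Real.sSup_le
    (forall_mem_image.2 fun x hx =>
      (hfg x hx).trans (mul_le_mul_of_nonneg_left (le_csSup hg (mem_image_of_mem g hx)) hc))
    (mul_nonneg hc (Real.sSup_nonneg (forall_mem_image.2 hg₀)))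

theorem stmt_0_general (X : Type*) [NormedAddCommGroup X] [NormedSpace ℝ X]
    (Y Z : Subspace ℝ X)
    (hZne : ∃ z : X, z ∈ Z ∧ z ≠ 0)
    (Θ₀ Ω₀ : ℝ)
    (hΘ : Θ₀ = sSup {d : ℝ | ∃ y : X, y ∈ Y ∧ ‖y‖ = 1 ∧ d = Metric.infDist y (Z : Set X)})
    (hΩ : Ω₀ = sSup {d : ℝ | ∃ y : X, y ∈ Y ∧ ‖y‖ = 1 ∧
      d = Metric.infDist y {z : X | z ∈ Z ∧ ‖z‖ = 1}}) :
    0 ≤ Θ₀ ∧ Θ₀ ≤ Ω₀ ∧ Ω₀ ≤ 2 * Θ₀ := by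
  set SY : Set X := {y | y ∈ Y ∧ ‖y‖ = 1}
  set SZ : Set X := {z | z ∈ Z ∧ ‖z‖ = 1}
  have hΘ' : Θ₀ = sSup ((infDist · (Z : Set X)) '' SY) := by
    rw [hΘ]; congr 1; ext; simp [SY, and_assoc, eq_comm]
  have hΩ' : Ω₀ = sSup ((infDist · SZ) '' SY) := by
    rw [hΩ]; congr 1; ext; simp [SY, and_assoc, eq_comm]
  have hSZ : SZ.Nonempty := by
    obtain ⟨z, hz, hne⟩ := hZne
    exact ⟨‖z‖⁻¹ • z, Z.smul_mem _ hz, norm_smul_inv_norm hne⟩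
  have hΩ_le : ∀ y ∈ SY, infDist y SZ ≤ 2 * infDist y (Z : Set X) :=
    fun y hy => infDist_unitSphere_le_two_mul_infDist Z hZne hy.2
  have hΘ_bdd : BddAbove ((infDist · (Z : Set X)) '' SY) :=
    ⟨1, forall_mem_image.2 fun y hy => hy.2 ▸ infDist_submodule_le_norm Z y⟩
  have hΩ_bdd : BddAbove ((infDist · SZ) '' SY) :=
    ⟨2, forall_mem_image.2 fun y hy => by
      linarith [hΩ_le y hy, hy.2 ▸ infDist_submodule_le_norm Z y]⟩
  refine ⟨hΘ' ▸ Real.sSup_nonneg (forall_mem_image.2 fun _ _ => infDist_nonneg), ?_, ?_⟩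
  · rw [hΘ', hΩ', ← one_mul (sSup ((infDist · SZ) '' SY))]
    refine Real.sSup_image_le_mul_sSup_image zero_le_one (fun _ _ => infDist_nonneg) hΩ_bdd
      fun y _ => ?_
    rw [one_mul]
    exact infDist_le_infDist_of_subset (fun z hz => hz.1) hSZ
  · rw [hΘ', hΩ']
    exact Real.sSup_image_le_mul_sSup_image zero_le_two (fun _ _ => infDist_nonneg) hΘ_bdd hΩ_le

/-- For closed subspaces Y, Z of a normed space X (Z nontrivial),
with Θ₀(Y,Z) = sup_{y ∈ S(Y)} dist(y, Z) and Ω₀(Y,Z) = sup_{y ∈ S(Y)} dist(y, S(Z)),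
we have 0 ≤ Θ₀ ≤ Ω₀ ≤ 2·Θ₀. -/
theorem stmt_0 (X : Type*) [NormedAddCommGroup X] [NormedSpace ℝ X]
    (Y Z : Subspace ℝ X) (hY : IsClosed (Y : Set X)) (hZ : IsClosed (Z : Set X))
    (hZne : ∃ z : X, z ∈ Z ∧ z ≠ 0)
    (Θ₀ Ω₀ : ℝ)
    (hΘ : Θ₀ = sSup {d : ℝ | ∃ y : X, y ∈ Y ∧ ‖y‖ = 1 ∧ d = Metric.infDist y (Z : Set X)})
    (hΩ : Ω₀ = sSup {d : ℝ | ∃ y : X, y ∈ Y ∧ ‖y‖ = 1 ∧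
      d = Metric.infDist y {z : X | z ∈ Z ∧ ‖z‖ = 1}}) :
    0 ≤ Θ₀ ∧ Θ₀ ≤ Ω₀ ∧ Ω₀ ≤ 2 * Θ₀ :=
  stmt_0_general X Y Z hZne Θ₀ Ω₀ hΘ hΩ
end

section
/- Let X be a real normed space, 0 < θ < 1, let (x_k) be a sequence in the unit sphere of X and (f_n) a sequence in the unit sphere of X* satisfying f_n(x_k) = θ if n ≤ k and f_n(x_k) = 0 if n > k. Let (a_k) be a finitely supported real sequence with Σ_k |a_k| = 1, and suppose there exists n ∈ ℕ such that a_k ≥ 0 for k < n and a_k ≤ 0 for k ≥ n. Then ‖Σ_k a_k x_k‖ ≥ θ/3. -/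
/-- With sequences (x_k)_{k≥1} in S(X) and (f_n)_{n≥1} in S(X*)
satisfying f_n(x_k) = θ for n ≤ k and = 0 for n > k, any finitely supported
coefficient sequence (a_k)_{k≥1} with Σ|a_k| = 1, a_k ≥ 0 for k < n and a_k ≤ 0
for k ≥ n (for some n ≥ 1), satisfies ‖Σ a_k x_k‖ ≥ θ/3. -/
theorem stmt_5 {X : Type*} [NormedAddCommGroup X] [NormedSpace ℝ X]
    (θ : ℝ) (hθ0 : 0 < θ) (hθ1 : θ < 1)
    (x : ℕ → X) (f : ℕ → (X →L[ℝ] ℝ))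
    (hx : ∀ k, 1 ≤ k → ‖x k‖ = 1) (hf : ∀ n, 1 ≤ n → ‖f n‖ = 1)
    (hfx : ∀ n k, 1 ≤ n → 1 ≤ k → ((n ≤ k → f n (x k) = θ) ∧ (k < n → f n (x k) = 0)))
    (a : ℕ → ℝ) (ha0 : a 0 = 0) (hfin : (Function.support a).Finite)
    (hsum : ∑ᶠ k, |a k| = 1)
    (n : ℕ) (hn : 1 ≤ n)
    (hpos : ∀ k, k < n → 0 ≤ a k) (hneg : ∀ k, n ≤ k → a k ≤ 0) :
    θ / 3 ≤ ‖∑ᶠ k, a k • x k‖ := by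
  classical
  set s := hfin.toFinset with hs
  set g : X →L[ℝ] ℝ := f 1 - (2 : ℝ) • f n with hg
  have hgnorm : ‖g‖ ≤ 3 := by
    calc ‖g‖ ≤ ‖f 1‖ + ‖(2 : ℝ) • f n‖ := norm_sub_le _ _
    _ = 1 + 2 * 1 := by
        rw [hf 1 le_rfl, norm_smul (2:ℝ) (f n), hf n hn]; norm_num
    _ = 3 := by norm_num
  -- rewrite finsums as finset sums over s
  have hS : ∑ᶠ k, a k • x k = ∑ k ∈ s, a k • x k := by
    apply finsum_eq_finset_sum_of_support_subset
    intro k hk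
    simp only [Function.mem_support] at hk
    have : a k ≠ 0 := fun h => hk (by simp [h])
    simpa [hs] using this
  have hA : ∑ᶠ k, |a k| = ∑ k ∈ s, |a k| := by
    apply finsum_eq_finset_sum_of_support_subset
    intro k hk
    simp only [Function.mem_support, abs_ne_zero] at hk
    simpa [hs] using hk
  -- compute g applied to the sum
  have hterm : ∀ k ∈ s, a k * g (x k) = θ * |a k| := by
    intro k hk
    have hk0 : a k ≠ 0 := by simpa [hs] using hk
    have hk1 : 1 ≤ k := by
      rcases Nat.eq_zero_or_pos k with h | h
      · exact absurd (h ▸ ha0) hk0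
      · exact h
    have hgk : g (x k) = if k < n then θ else -θ := by
      by_cases hkn : k < n
      · have h1 : f 1 (x k) = θ := ((hfx 1 k le_rfl hk1).1 hk1)
        have h2 : f n (x k) = 0 := ((hfx n k hn hk1).2 hkn)
        simp [hg, h1, h2, hkn]
      · have hnk : n ≤ k := le_of_not_gt hkn
        have h1 : f 1 (x k) = θ := ((hfx 1 k le_rfl hk1).1 hk1)
        have h2 : f n (x k) = θ := ((hfx n k hn hk1).1 hnk)
        simp [hg, h1, h2, hkn]; ring
    by_cases hkn : k < n
    · have := hpos k hkn
      rw [hgk, if_pos hkn, abs_of_nonneg this]; ring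
    · have := hneg k (le_of_not_gt hkn)
      rw [hgk, if_neg hkn, abs_of_nonpos this]; ring
  have hgS : g (∑ k ∈ s, a k • x k) = θ := by
    rw [map_sum]
    have : ∀ k ∈ s, g (a k • x k) = θ * |a k| := by
      intro k hk
      rw [ContinuousLinearMap.map_smul]
      simpa [smul_eq_mul] using hterm k hk
    rw [Finset.sum_congr rfl this, ← Finset.mul_sum, ← hA, hsum, mul_one]
  have hbound : θ ≤ 3 * ‖∑ k ∈ s, a k • x k‖ := by
    calc θ = g (∑ k ∈ s, a k • x k) := hgS.symm
    _ ≤ |g (∑ k ∈ s, a k • x k)| := le_abs_self _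
    _ ≤ ‖g‖ * ‖∑ k ∈ s, a k • x k‖ := g.le_opNorm _
    _ ≤ 3 * ‖∑ k ∈ s, a k • x k‖ := by
        exact mul_le_mul_of_nonneg_right hgnorm (norm_nonneg _)
  rw [hS]
  linarith
end

section
/- Let X be a real normed space, ε ∈ (0,1), and let x, y be unit vectors of X such that dist(y, span{x}) > 1 − ε. Then for all real r, s with |r| + |s| = 1 one has ‖r·x + s·y‖ ≥ (1−ε)/(3−ε). -/
/-- If x, y are unit vectors with dist(y, span{x}) > 1 − ε (ε ∈ (0,1)),
then ‖r·x + s·y‖ ≥ (1−ε)/(3−ε) for all r, s with |r| + |s| = 1. -/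
theorem stmt_7 {X : Type*} [NormedAddCommGroup X] [NormedSpace ℝ X]
    (ε : ℝ) (hε : ε ∈ Set.Ioo (0 : ℝ) 1)
    (x y : X) (hx : ‖x‖ = 1) (hy : ‖y‖ = 1)
    (hd : 1 - ε < Metric.infDist y ((Submodule.span ℝ {x} : Submodule ℝ X) : Set X)) :
    ∀ r s : ℝ, |r| + |s| = 1 → (1 - ε) / (3 - ε) ≤ ‖r • x + s • y‖ := by
  obtain ⟨hε0, hε1⟩ := hε
  intro r s hrs
  have h3 : (0:ℝ) < 3 - ε := by linarith
  rcases le_or_gt (1 / (3 - ε)) |s| with hs | hs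
  · -- |s| large
    have hs0 : s ≠ 0 := by
      intro h; rw [h] at hs; simp at hs
      have : (0:ℝ) < 1 / (3 - ε) := by positivity
      linarith
    have hmem : (-(r / s)) • x ∈ (Submodule.span ℝ {x} : Submodule ℝ X) :=
      Submodule.smul_mem _ _ (Submodule.mem_span_singleton_self x)
    have h1 : Metric.infDist y ((Submodule.span ℝ {x} : Submodule ℝ X) : Set X)
        ≤ ‖y - (-(r / s)) • x‖ := by
      simpa [dist_eq_norm] using Metric.infDist_le_dist_of_mem hmem
    have key : ‖r • x + s • y‖ = |s| * ‖y - (-(r / s)) • x‖ := by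
      rw [← Real.norm_eq_abs, ← norm_smul]
      congr 1
      rw [smul_sub, smul_smul]
      have hsr : s * (-(r / s)) = -r := by field_simp
      rw [hsr, neg_smul, sub_neg_eq_add, add_comm]
    rw [key]
    have h2 : 1 - ε ≤ ‖y - (-(r / s)) • x‖ := le_trans (le_of_lt hd) h1
    calc (1 - ε) / (3 - ε) = (1 / (3 - ε)) * (1 - ε) := by ring
    _ ≤ |s| * ‖y - (-(r / s)) • x‖ := by
        apply mul_le_mul hs h2 (by linarith) (abs_nonneg s)
  · -- |s| small
    have h1 : ‖r • x‖ ≤ ‖r • x + s • y‖ + ‖s • y‖ := by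
      calc ‖r • x‖ = ‖(r • x + s • y) - s • y‖ := by congr 1; abel
      _ ≤ ‖r • x + s • y‖ + ‖s • y‖ := norm_sub_le _ _
    rw [norm_smul, norm_smul, hx, hy] at h1
    simp only [Real.norm_eq_abs, mul_one] at h1
    have hr : |r| = 1 - |s| := by linarith
    have : (1 - ε) / (3 - ε) ≤ 1 - 2 * |s| := by
      rw [div_le_iff₀ h3]
      rw [lt_div_iff₀ h3] at hs
      nlinarith
    linarith
end

section
/- Let X be a real normed space, ε > 0, n ∈ ℕ, and let x₁, …, xₙ be elements of the closed unit ball of X such that ‖x₁ + ⋯ + x_k − x_{k+1} − ⋯ − xₙ‖ ≥ n(1−ε) for every k ∈ {1, …, n}. Let a₁, …, aₙ be real numbers with Σᵢ |aᵢ| = 1 such that for some k ∈ {1, …, n} we have aᵢ ≥ 0 for i < k and aᵢ ≤ 0 for i ≥ k. Then ‖Σᵢ aᵢ xᵢ‖ ≥ 1 − n·ε. -/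
/-- If x₁,…,xₙ in the closed unit ball satisfy
‖x₁+⋯+x_k − x_{k+1}−⋯−xₙ‖ ≥ n(1−ε) for every k, and a₁,…,aₙ are reals with
Σ|aᵢ| = 1, aᵢ ≥ 0 for i < k₀ and aᵢ ≤ 0 for i ≥ k₀ (some k₀), then
‖Σ aᵢxᵢ‖ ≥ 1 − nε.  (Indices are 0-based here.) -/
theorem stmt_9 {X : Type*} [NormedAddCommGroup X] [NormedSpace ℝ X]
    (ε : ℝ) (hε : 0 < ε) (n : ℕ) (x : Fin n → X) (hx : ∀ i, ‖x i‖ ≤ 1)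
    (h : ∀ k : Fin n,
      (n : ℝ) * (1 - ε) ≤ ‖∑ i, (if i ≤ k then (1 : ℝ) else -1) • x i‖)
    (a : Fin n → ℝ) (hsum : ∑ i, |a i| = 1)
    (k₀ : Fin n) (hpos : ∀ i, i < k₀ → 0 ≤ a i) (hneg : ∀ i, k₀ ≤ i → a i ≤ 0) :
    1 - (n : ℝ) * ε ≤ ‖∑ i, a i • x i‖ := by
  have hn : 0 < n := k₀.pos
  set s : Fin n → ℝ := fun i => if i < k₀ then 1 else -1 with hs
  have habs1 : ∀ i, |a i| ≤ 1 := by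
    intro i
    rw [← hsum]
    exact Finset.single_le_sum (fun j _ => abs_nonneg (a j)) (Finset.mem_univ i)
  have hA : (n : ℝ) * (1 - ε) ≤ ‖∑ i, s i • x i‖ := by
    rcases Nat.eq_zero_or_pos k₀.val with h0 | hk
    · have heq : ∑ i, s i • x i
        = -∑ i, (if i ≤ (⟨n-1, by omega⟩ : Fin n) then (1:ℝ) else -1) • x i := by
        rw [← Finset.sum_neg_distrib]
        apply Finset.sum_congr rfl
        intro i _
        have h1 : ¬ i < k₀ := by simp [Fin.lt_def, h0]
        have h2 : i ≤ (⟨n-1, by omega⟩ : Fin n) := by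
          simp only [Fin.le_def]; omega
        simp [hs, h1, h2, neg_smul]
      rw [heq, norm_neg]
      exact h _
    · have heq : ∑ i, s i • x i
        = ∑ i, (if i ≤ (⟨k₀.val - 1, by omega⟩ : Fin n) then (1:ℝ) else -1) • x i := by
        apply Finset.sum_congr rfl
        intro i _
        have hiff : (i < k₀) ↔ (i ≤ (⟨k₀.val - 1, by omega⟩ : Fin n)) := by
          simp only [Fin.lt_def, Fin.le_def]; omega
        simp only [hs]
        congr 1
        rw [if_congr hiff rfl rfl]
      rw [heq]
      exact h _
  have hdecomp : ∑ i, s i • x i = (∑ i, a i • x i) + ∑ i, (s i * (1 - |a i|)) • x i := by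
    rw [← Finset.sum_add_distrib]
    apply Finset.sum_congr rfl
    intro i _
    have hsa : s i * |a i| = a i := by
      by_cases hi : i < k₀
      · simp [hs, hi, abs_of_nonneg (hpos i hi)]
      · simp [hs, hi, abs_of_nonpos (hneg i (not_lt.mp hi))]
    have hrw : s i = a i + s i * (1 - |a i|) := by rw [mul_one_sub, hsa]; ring
    rw [← add_smul, ← hrw]
  have hB : ‖∑ i, (s i * (1 - |a i|)) • x i‖ ≤ (n : ℝ) - 1 := by
    calc ‖∑ i, (s i * (1 - |a i|)) • x i‖ ≤ ∑ i, ‖(s i * (1 - |a i|)) • x i‖ :=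
          norm_sum_le _ _
    _ ≤ ∑ i, (1 - |a i|) := by
        apply Finset.sum_le_sum
        intro i _
        rw [norm_smul]
        have hsabs : |s i| = 1 := by
          simp only [hs]; split <;> simp
        have h1 : ‖s i * (1 - |a i|)‖ = 1 - |a i| := by
          rw [Real.norm_eq_abs, abs_mul, hsabs, one_mul,
            abs_of_nonneg (by linarith [habs1 i])]
        rw [h1]
        calc (1 - |a i|) * ‖x i‖ ≤ (1 - |a i|) * 1 :=
              mul_le_mul_of_nonneg_left (hx i) (by linarith [habs1 i])
        _ = 1 - |a i| := mul_one _
    _ = (n:ℝ) - 1 := by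
        rw [Finset.sum_sub_distrib, hsum]; simp
  have key : (n:ℝ) * (1 - ε) ≤ ‖∑ i, a i • x i‖ + ((n:ℝ) - 1) := by
    calc (n:ℝ)*(1-ε) ≤ ‖∑ i, s i • x i‖ := hA
    _ ≤ ‖∑ i, a i • x i‖ + ‖∑ i, (s i * (1 - |a i|)) • x i‖ := by
        rw [hdecomp]; exact norm_add_le _ _
    _ ≤ ‖∑ i, a i • x i‖ + ((n:ℝ) - 1) := by linarith
  have hexp : (n:ℝ) * (1 - ε) = (n:ℝ) - (n:ℝ) * ε := by ring
  linarith
end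

section
/- Let Y and Z be real Banach spaces and D : S(Y*) → S(Z*) a map between their dual unit spheres. Then the function p on Y × Z defined by p(y,z) = sup{ |y*(y) − (D y*)(z)| : y* ∈ S(Y*) } is a seminorm on the direct sum Y ⊕ Z; moreover p(y,0) = ‖y‖ for all y ∈ Y, and if D is surjective then p(0,z) = ‖z‖ for all z ∈ Z. -/
/-!
Each `g` in the dual sphere gives the continuous linear functional `(y, z) ↦ g y - (D g) z` of
norm at most two, so `p` is a pointwise bounded supremum of the seminorms `|ℓ|` and hence a
seminorm. On `Y × {0}` the supremum is `sup {|g y| : ‖g‖ = 1}`, which is `‖y‖` by Hahn–Banach;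
on `{0} × Z` it is `sup {|h z| : h = D g}`, which is `‖z‖` once `D` hits the whole sphere.
-/

open Set Metric

theorem Seminorm.iSup_normSeminorm_comp_apply {ι E : Type*} [AddCommGroup E] [Module ℝ E]
    (ℓ : ι → E →ₗ[ℝ] ℝ) (hℓ : ∀ v, BddAbove (range fun i => |ℓ i v|)) (v : E) :
    (⨆ i, (normSeminorm ℝ ℝ).comp (ℓ i)) v = ⨆ i, |ℓ i v| :=
  Seminorm.iSup_apply (Seminorm.bddAbove_range_iff.2 hℓ)

section DualSphere

variable {E : Type*} [NormedAddCommGroup E] [NormedSpace ℝ E]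

theorem abs_apply_le_norm_of_mem_sphere {g : E →L[ℝ] ℝ} (hg : g ∈ sphere (0 : E →L[ℝ] ℝ) 1)
    (x : E) : |g x| ≤ ‖x‖ := by
  simpa [mem_sphere_zero_iff_norm.1 hg] using g.le_opNorm x

theorem iSup_sphere_abs_apply_eq_norm (x : E) :
    ⨆ g : sphere (0 : E →L[ℝ] ℝ) 1, |(g : E →L[ℝ] ℝ) x| = ‖x‖ := by
  refine le_antisymm (Real.iSup_le (fun g => abs_apply_le_norm_of_mem_sphere g.2 x)
    (norm_nonneg x)) ?_
  rcases eq_or_ne x 0 with rfl | hx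
  · exact norm_zero (E := E) ▸ Real.iSup_nonneg fun _ => abs_nonneg _
  obtain ⟨g, hg, hgx⟩ := exists_dual_vector ℝ x (norm_ne_zero_iff.2 hx)
  refine le_ciSup_of_le ⟨‖x‖, forall_mem_range.2 fun g => abs_apply_le_norm_of_mem_sphere g.2 x⟩
    ⟨g, mem_sphere_zero_iff_norm.2 hg⟩ ?_
  simp [hgx]

end DualSphere

theorem stmt_12_general {Y Z : Type*}
    [NormedAddCommGroup Y] [NormedSpace ℝ Y]
    [NormedAddCommGroup Z] [NormedSpace ℝ Z]
    (D : (Y →L[ℝ] ℝ) → (Z →L[ℝ] ℝ)) (hD : ∀ g : Y →L[ℝ] ℝ, ‖g‖ = 1 → ‖D g‖ = 1)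
    (p : Y × Z → ℝ)
    (hp : ∀ v : Y × Z,
      p v = sSup {t : ℝ | ∃ g : Y →L[ℝ] ℝ, ‖g‖ = 1 ∧ t = |g v.1 - (D g) v.2|}) :
    (∀ v w : Y × Z, p (v + w) ≤ p v + p w) ∧
    (∀ (c : ℝ) (v : Y × Z), p (c • v) = |c| * p v) ∧
    (∀ y : Y, p (y, 0) = ‖y‖) ∧
    ((∀ h : Z →L[ℝ] ℝ, ‖h‖ = 1 → ∃ g : Y →L[ℝ] ℝ, ‖g‖ = 1 ∧ D g = h) →
      ∀ z : Z, p (0, z) = ‖z‖) := by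
  let S := sphere (0 : Y →L[ℝ] ℝ) 1
  have hDS : MapsTo D S (sphere 0 1) := fun g hg =>
    mem_sphere_zero_iff_norm.2 (hD g (mem_sphere_zero_iff_norm.1 hg))
  have hp_iSup : ∀ v : Y × Z, p v = ⨆ g : S, |g.1 v.1 - D g v.2| := fun v => by
    rw [hp, iSup, ← image_univ]
    congr 1; ext t; simp [S, eq_comm]
  let q : Seminorm ℝ (Y × Z) := ⨆ g : S, (normSeminorm ℝ ℝ).comp (g.1.coprod (-D g)).toLinearMap
  have hpq : ∀ v, p v = q v := fun v => by
    rw [hp_iSup, Seminorm.iSup_normSeminorm_comp_apply]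
    · simp [sub_eq_add_neg]
    · refine fun v => ⟨‖v.1‖ + ‖v.2‖, forall_mem_range.2 fun g => ?_⟩
      simpa [← sub_eq_add_neg] using (abs_sub _ _).trans (add_le_add
        (abs_apply_le_norm_of_mem_sphere g.2 v.1) (abs_apply_le_norm_of_mem_sphere (hDS g.2) v.2))
  refine ⟨fun v w => by simpa only [hpq] using map_add_le_add q v w,
    fun c v => by simpa only [hpq, Real.norm_eq_abs] using map_smul_eq_mul q c v,
    fun y => by simpa [hp_iSup] using iSup_sphere_abs_apply_eq_norm y, fun hsurj z => ?_⟩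
  have hDS_surj : Function.Surjective hDS.restrict := hDS.restrict_surjective_iff.2 fun h hh => by
    obtain ⟨g, hg, rfl⟩ := hsurj h (mem_sphere_zero_iff_norm.1 hh)
    exact ⟨g, mem_sphere_zero_iff_norm.2 hg, rfl⟩
  simpa [hp_iSup] using
    (hDS_surj.iSup_comp fun h => |h.1 z|).trans (iSup_sphere_abs_apply_eq_norm z)

/-- Given Banach spaces Y, Z and a map D taking the dual unit sphere
S(Y*) into S(Z*), the function p(y,z) = sup{|y*(y) − (Dy*)(z)| : y* ∈ S(Y*)} is a
seminorm on Y × Z; moreover p(y,0) = ‖y‖, and if D maps S(Y*) onto S(Z*) then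
p(0,z) = ‖z‖. -/
theorem stmt_12 {Y Z : Type*}
    [NormedAddCommGroup Y] [NormedSpace ℝ Y] [CompleteSpace Y]
    [NormedAddCommGroup Z] [NormedSpace ℝ Z] [CompleteSpace Z]
    (D : (Y →L[ℝ] ℝ) → (Z →L[ℝ] ℝ)) (hD : ∀ g : Y →L[ℝ] ℝ, ‖g‖ = 1 → ‖D g‖ = 1)
    (p : Y × Z → ℝ)
    (hp : ∀ v : Y × Z,
      p v = sSup {t : ℝ | ∃ g : Y →L[ℝ] ℝ, ‖g‖ = 1 ∧ t = |g v.1 - (D g) v.2|}) :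
    (∀ v w : Y × Z, p (v + w) ≤ p v + p w) ∧
    (∀ (c : ℝ) (v : Y × Z), p (c • v) = |c| * p v) ∧
    (∀ y : Y, p (y, 0) = ‖y‖) ∧
    ((∀ h : Z →L[ℝ] ℝ, ‖h‖ = 1 → ∃ g : Y →L[ℝ] ℝ, ‖g‖ = 1 ∧ D g = h) →
      ∀ z : Z, p (0, z) = ‖z‖) :=
  stmt_12_general D hD p hp
end

section
/- Let X be a real Banach space and let A be a set of unit vectors a in l₁(ℕ) such that whenever a₀ ∈ A and a ∈ l₁(ℕ) is a unit vector with sign(a(n)) = sign(a₀(n)) for all n, then a ∈ A. Suppose x : ℕ → X is a bounded function with ‖x(n)‖ ≤ 1 for all n and inf_{a∈A} ‖Σ_n a(n)x(n)‖ ≥ c > 0. Then for every a₀ ∈ A with finite support there exists f ∈ X* with ‖f‖ ≤ 1 such that for every n in the support of a₀: |f(x(n))| ≥ c and sign(f(x(n))) = sign(a₀(n)). -/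
/-!
Let `S` be the support of `a₀` and `pₙ = sign (a₀ n) • x n`. Every point `∑ wₙ • pₙ` of the convex
hull of the `pₙ`, `n ∈ S`, has norm at least `c`: for `0 < ε < 1` the coefficients
`sign (a₀ n) * ((1 - ε) * wₙ + ε * |a₀ n|)` form a unit vector of `ℓ¹` with the sign pattern of
`a₀`, hence lie in `A`, and the corresponding sum is `(1 - ε) • ∑ wₙ • pₙ + ε • ∑ a₀ n • x n`;
now let `ε → 0`. Separating this hull from the open ball of radius `c` (Hahn–Banach) gives `f`
with `‖f‖ ≤ 1` and `c ≤ f pₙ = sign (a₀ n) * f (x n)` for `n ∈ S`.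
-/

open Set Filter Topology Metric

namespace Real

theorem sign_mul_abs (r : ℝ) : sign r * |r| = r := by
  rcases lt_trichotomy r 0 with h | rfl | h
  · rw [sign_of_neg h, abs_of_neg h]; ring
  · simp
  · rw [sign_of_pos h, abs_of_pos h, one_mul]

theorem abs_sign_of_ne_zero {r : ℝ} (hr : r ≠ 0) : |sign r| = 1 := by
  rcases sign_apply_eq_of_ne_zero r hr with h | h <;> simp [h]

theorem sign_sign_mul_of_pos (r : ℝ) {q : ℝ} (hq : 0 < q) : sign (sign r * q) = sign r := by
  rcases lt_trichotomy r 0 with h | rfl | h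
  · rw [sign_of_neg h, sign_of_neg (by linarith)]
  · simp
  · rw [sign_of_pos h, one_mul, sign_of_pos hq]

theorem le_abs_and_sign_eq_of_le_sign_mul {r v c : ℝ} (hc : 0 < c) (h : c ≤ sign r * v) :
    c ≤ |v| ∧ sign v = sign r := by
  rcases lt_trichotomy r 0 with hr | rfl | hr
  · rw [sign_of_neg hr] at h ⊢
    exact ⟨le_abs.2 (Or.inr (by linarith)), sign_of_neg (by linarith)⟩
  · simp at h; linarith
  · rw [sign_of_pos hr] at h ⊢
    exact ⟨le_abs.2 (Or.inl (by linarith)), sign_of_pos (by linarith)⟩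

end Real

theorem Finset.convexHull_image_eq {R E ι : Type*} [Field R] [LinearOrder R]
    [IsStrictOrderedRing R] [AddCommGroup E] [Module R E] (s : Finset ι) (z : ι → E) :
    convexHull R (z '' s) =
      {y | ∃ w : ι → R, (∀ i ∈ s, 0 ≤ w i) ∧ ∑ i ∈ s, w i = 1 ∧ ∑ i ∈ s, w i • z i = y} := by
  classical
  refine Set.Subset.antisymm (convexHull_min ?_ ?_) ?_
  · rintro _ ⟨i, hi : i ∈ s, rfl⟩
    exact ⟨Pi.single i 1, fun j _ => by by_cases h : j = i <;> simp [h], by simp [hi],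
      by simp [Pi.single_apply, hi]⟩
  · rintro _ ⟨w₁, hw₁0, hw₁1, rfl⟩ _ ⟨w₂, hw₂0, hw₂1, rfl⟩ a b ha hb hab
    refine ⟨fun i => a * w₁ i + b * w₂ i, fun i hi => ?_, ?_, ?_⟩
    · have := hw₁0 i hi; have := hw₂0 i hi; positivity
    · simp [Finset.sum_add_distrib, ← Finset.mul_sum, hw₁1, hw₂1, hab]
    · simp [Finset.smul_sum, ← Finset.sum_add_distrib, add_smul, mul_smul]
  · rintro _ ⟨w, hw0, hw1, rfl⟩
    rw [← s.centerMass_eq_of_sum_1 _ hw1]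
    exact s.centerMass_mem_convexHull hw0 (by simp [hw1]) fun i hi => Set.mem_image_of_mem z hi

theorem le_norm_of_forall_le_norm_segment {E : Type*} [SeminormedAddCommGroup E]
    [NormedSpace ℝ E] {y z : E} {c : ℝ} (h : ∀ ε ∈ Ioo (0 : ℝ) 1, c ≤ ‖(1 - ε) • y + ε • z‖) :
    c ≤ ‖y‖ := by
  have hlim : Tendsto (fun ε : ℝ => ‖(1 - ε) • y + ε • z‖) (𝓝[>] 0) (𝓝 ‖y‖) := by
    have hcont : Continuous fun ε : ℝ => ‖(1 - ε) • y + ε • z‖ := by fun_prop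
    simpa using (hcont.tendsto 0).mono_left nhdsWithin_le_nhds
  exact ge_of_tendsto hlim (eventually_of_mem (Ioo_mem_nhdsGT zero_lt_one) h)

theorem Convex.exists_norm_le_one_forall_le_apply {E : Type*} [NormedAddCommGroup E]
    [NormedSpace ℝ E] {K : Set E} (hK : Convex ℝ K) {c : ℝ} (hKc : ∀ y ∈ K, c ≤ ‖y‖) :
    ∃ f : StrongDual ℝ E, ‖f‖ ≤ 1 ∧ ∀ y ∈ K, c ≤ f y := by
  rcases le_or_gt c 0 with hc | hc
  · exact ⟨0, by simp, fun y _ => by simpa using hc⟩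
  have hdisj : Disjoint (ball (0 : E) c) K :=
    disjoint_left.2 fun y hy hyK => (hKc y hyK).not_gt (mem_ball_zero_iff.1 hy)
  obtain ⟨f, u, hball, hKu⟩ := geometric_hahn_banach_open (convex_ball 0 c) isOpen_ball hK hdisj
  have hu : 0 < u := by simpa using hball 0 (mem_ball_self hc)
  have hpolar : u⁻¹ • f ∈ StrongDual.polar ℝ (ball (0 : E) c) := by
    refine (StrongDual.mem_polar_iff ℝ _).2 fun v hv => ?_
    have h₁ := hball v hv
    have h₂ := hball (-v) (by simpa using hv)
    rw [map_neg] at h₂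
    rw [smul_apply, smul_eq_mul, norm_mul, norm_inv, Real.norm_eq_abs, Real.norm_eq_abs,
      abs_of_pos hu, inv_mul_le_one₀ hu]
    exact abs_le.2 ⟨by linarith, h₁.le⟩
  rw [NormedSpace.polar_ball hc, mem_closedBall_zero_iff] at hpolar
  refine ⟨c • u⁻¹ • f, ?_, fun y hy => ?_⟩
  · calc ‖c • u⁻¹ • f‖ = c * ‖u⁻¹ • f‖ := by rw [norm_smul, Real.norm_eq_abs, abs_of_pos hc]
      _ ≤ c * c⁻¹ := by gcongr
      _ = 1 := mul_inv_cancel₀ hc.ne'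
  · have := hKu y hy
    simp only [smul_apply, smul_eq_mul]
    calc c = c * (u⁻¹ * u) := by rw [inv_mul_cancel₀ hu.ne', mul_one]
      _ ≤ c * (u⁻¹ * f y) := by gcongr

def IsSignPatternClosed (A : Set (ℕ → ℝ)) : Prop :=
  ∀ a₀ ∈ A, ∀ a : ℕ → ℝ, Summable (fun n => |a n|) → ∑' n, |a n| = 1 →
    (∀ n, Real.sign (a n) = Real.sign (a₀ n)) → a ∈ A

/-- The term `ε * |a₀ n|` keeps the sign of `a₀ n` also where `w n = 0`. -/
noncomputable def signedMix (a₀ w : ℕ → ℝ) (ε : ℝ) (n : ℕ) : ℝ :=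
  Real.sign (a₀ n) * ((1 - ε) * w n + ε * |a₀ n|)

section SignedMix

variable {a₀ w : ℕ → ℝ} {s : Finset ℕ} {ε : ℝ}

theorem signedMix_mem {A : Set (ℕ → ℝ)} (hA : IsSignPatternClosed A) (ha₀ : a₀ ∈ A)
    (ha₀_norm : ∑' n, |a₀ n| = 1) (hs : ∀ n, n ∈ s ↔ a₀ n ≠ 0) (hw₀ : ∀ n ∈ s, 0 ≤ w n)
    (hw₁ : ∑ n ∈ s, w n = 1) (hε : ε ∈ Ioo (0 : ℝ) 1) : signedMix a₀ w ε ∈ A := by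
  have hq : ∀ n ∈ s, 0 < (1 - ε) * w n + ε * |a₀ n| := fun n hn => by
    have := hw₀ n hn
    have := abs_pos.2 ((hs n).1 hn)
    have := hε.1; have := hε.2
    positivity
  have ha₀_out : ∀ n ∉ s, a₀ n = 0 := fun n hn => of_not_not ((hs n).not.1 hn)
  have hzero : ∀ n ∉ s, |signedMix a₀ w ε n| = 0 := fun n hn => by
    simp [signedMix, ha₀_out n hn]
  refine hA a₀ ha₀ _ (summable_of_ne_finset_zero hzero) ?_ fun n => ?_
  · rw [tsum_eq_sum (s := s) fun n hn => by simp [ha₀_out n hn]] at ha₀_norm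
    calc ∑' n, |signedMix a₀ w ε n| = ∑ n ∈ s, ((1 - ε) * w n + ε * |a₀ n|) := by
          rw [tsum_eq_sum hzero]
          refine Finset.sum_congr rfl fun n hn => ?_
          rw [signedMix, abs_mul, Real.abs_sign_of_ne_zero ((hs n).1 hn), one_mul,
            abs_of_pos (hq n hn)]
      _ = 1 := by
          rw [Finset.sum_add_distrib, ← Finset.mul_sum, ← Finset.mul_sum, hw₁, ha₀_norm]; ring
  · by_cases hn : n ∈ s
    · exact Real.sign_sign_mul_of_pos _ (hq n hn)
    · simp [signedMix, ha₀_out n hn]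

theorem tsum_signedMix_smul {X : Type*} [AddCommGroup X] [Module ℝ X] [TopologicalSpace X]
    (x : ℕ → X) (hs : ∀ n ∉ s, a₀ n = 0) :
    ∑' n, signedMix a₀ w ε n • x n =
      (1 - ε) • ∑ n ∈ s, w n • Real.sign (a₀ n) • x n + ε • ∑ n ∈ s, a₀ n • x n := by
  rw [tsum_eq_sum fun n hn => by simp [signedMix, hs n hn], Finset.smul_sum, Finset.smul_sum,
    ← Finset.sum_add_distrib]
  refine Finset.sum_congr rfl fun n _ => ?_
  have := Real.sign_mul_abs (a₀ n)
  simp only [signedMix, smul_smul, ← add_smul]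
  congr 1
  linear_combination ε * this

theorem le_norm_of_mem_convexHull_sign_smul {X : Type*} [NormedAddCommGroup X] [NormedSpace ℝ X]
    {A : Set (ℕ → ℝ)} (hA : IsSignPatternClosed A) (ha₀ : a₀ ∈ A) (ha₀_norm : ∑' n, |a₀ n| = 1)
    (hs : ∀ n, n ∈ s ↔ a₀ n ≠ 0) {x : ℕ → X} {c : ℝ} (hinf : ∀ a ∈ A, c ≤ ‖∑' n, a n • x n‖)
    {y : X} (hy : y ∈ convexHull ℝ ((fun n => Real.sign (a₀ n) • x n) '' s)) : c ≤ ‖y‖ := by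
  obtain ⟨w, hw₀, hw₁, rfl⟩ := (s.convexHull_image_eq _).subset hy
  refine le_norm_of_forall_le_norm_segment (z := ∑ n ∈ s, a₀ n • x n) fun ε hε => ?_
  rw [← tsum_signedMix_smul x fun n hn => of_not_not ((hs n).not.1 hn)]
  exact hinf _ (signedMix_mem hA ha₀ ha₀_norm hs hw₀ hw₁ hε)

end SignedMix

theorem stmt_14_general {X : Type*} [NormedAddCommGroup X] [NormedSpace ℝ X]
    (A : Set (ℕ → ℝ))
    (hA1 : ∀ a ∈ A, Summable (fun n => |a n|) ∧ ∑' n, |a n| = 1)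
    (hA2 : ∀ a₀ ∈ A, ∀ a : ℕ → ℝ, Summable (fun n => |a n|) → ∑' n, |a n| = 1 →
      (∀ n, Real.sign (a n) = Real.sign (a₀ n)) → a ∈ A)
    (x : ℕ → X)
    (c : ℝ) (hc : 0 < c)
    (hinf : ∀ a ∈ A, c ≤ ‖∑' n, a n • x n‖) :
    ∀ a₀ ∈ A, (Function.support a₀).Finite →
      ∃ f : X →L[ℝ] ℝ, ‖f‖ ≤ 1 ∧ ∀ n ∈ Function.support a₀,
        c ≤ |f (x n)| ∧ Real.sign (f (x n)) = Real.sign (a₀ n) := by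
  intro a₀ ha₀ hfin
  have hs : ∀ n, n ∈ hfin.toFinset ↔ a₀ n ≠ 0 := fun n => by simp
  obtain ⟨f, hf_norm, hf⟩ := (convex_convexHull ℝ _).exists_norm_le_one_forall_le_apply
    fun y hy => le_norm_of_mem_convexHull_sign_smul hA2 ha₀ (hA1 a₀ ha₀).2 hs hinf hy
  refine ⟨f, hf_norm, fun n hn => Real.le_abs_and_sign_eq_of_le_sign_mul hc ?_⟩
  have hpn := hf _ (subset_convexHull ℝ _ (mem_image_of_mem _ (hfin.mem_toFinset.2 hn)))
  rwa [map_smul, smul_eq_mul] at hpn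

/-- Lemma 1 for Γ = ℕ: Let A be a set of unit vectors of l₁(ℕ) closed
under keeping the sign pattern. If x : ℕ → X has ‖x(n)‖ ≤ 1 and
‖Σ_n a(n)x(n)‖ ≥ c > 0 for every a ∈ A, then for every finitely supported a₀ ∈ A
there is f ∈ X* with ‖f‖ ≤ 1 such that |f(x(n))| ≥ c and
sign(f(x(n))) = sign(a₀(n)) for every n in the support of a₀. -/
theorem stmt_14 {X : Type*} [NormedAddCommGroup X] [NormedSpace ℝ X] [CompleteSpace X]
    (A : Set (ℕ → ℝ))
    (hA1 : ∀ a ∈ A, Summable (fun n => |a n|) ∧ ∑' n, |a n| = 1)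
    (hA2 : ∀ a₀ ∈ A, ∀ a : ℕ → ℝ, Summable (fun n => |a n|) → ∑' n, |a n| = 1 →
      (∀ n, Real.sign (a n) = Real.sign (a₀ n)) → a ∈ A)
    (x : ℕ → X) (hx : ∀ n, ‖x n‖ ≤ 1)
    (c : ℝ) (hc : 0 < c)
    (hinf : ∀ a ∈ A, c ≤ ‖∑' n, a n • x n‖) :
    ∀ a₀ ∈ A, (Function.support a₀).Finite →
      ∃ f : X →L[ℝ] ℝ, ‖f‖ ≤ 1 ∧ ∀ n ∈ Function.support a₀,
        c ≤ |f (x n)| ∧ Real.sign (f (x n)) = Real.sign (a₀ n) :=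
  stmt_14_general A hA1 hA2 x c hc hinf
end
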